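/- Let G be a finite abelian group with |G| > 1, let m ∈ ℕ, and let W ⊆ ℤ be a nonempty set of weights that is multiplicatively closed modulo exp(G) and non-trivial modulo exp(G). Then D_{W,m+1}(G) ≥ D_{W,m}(G) + 2. -/

import Mathlib

open scoped BigOperators

/-- `l` encodes a `W`-weighted zero-subsum of the sequence (multiset) `S`:
a nonempty list of (weight, group element) pairs with weights in `W`, whose
group elements form a sub-multiset of `S` and whose weighted sum is zero. -/
def IsWZeroSubsum {G : Type*} [AddCommGroup G] (W : Set ℤ) (S : Multiset G)
    (l : List (ℤ × G)) : Prop :=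
  l ≠ [] ∧ (∀ p ∈ l, p.1 ∈ W) ∧ (↑(l.map Prod.snd) : Multiset G) ≤ S ∧
    (l.map fun p => p.1 • p.2).sum = 0

/-- `S` has a `W`-weighted zero-subsum whose length lies in `L`. -/
def HasWZeroSubsumLen {G : Type*} [AddCommGroup G] (W : Set ℤ) (S : Multiset G)
    (L : Set ℕ) : Prop :=
  ∃ l : List (ℤ × G), IsWZeroSubsum W S l ∧ l.length ∈ L

/-- `S` has `m` pairwise disjoint `W`-weighted zero-subsums. -/
def HasDisjointWZeroSubsums {G : Type*} [AddCommGroup G] (W : Set ℤ) (S : Multiset G)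
    (m : ℕ) : Prop :=
  ∃ ls : List (List (ℤ × G)), ls.length = m ∧
    (∀ l ∈ ls, l ≠ [] ∧ (∀ p ∈ l, p.1 ∈ W) ∧ (l.map fun p => p.1 • p.2).sum = 0) ∧
    (↑(ls.flatten.map Prod.snd) : Multiset G) ≤ S

/-- The `m`-wise `W`-weighted Davenport constant `D_{W,m}(G)`. -/
noncomputable def DW (W : Set ℤ) (G : Type*) [AddCommGroup G] (m : ℕ) : ℕ :=
  sInf {n : ℕ | ∀ S : Multiset G, n ≤ Multiset.card S → HasDisjointWZeroSubsums W S m}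

/-- The `L`-constrained `W`-weighted Davenport constant `s_{W,L}(G)`, valued in `ℕ∞`. -/
noncomputable def sWL (W : Set ℤ) (G : Type*) [AddCommGroup G] (L : Set ℕ) : ℕ∞ :=
  sInf {N : ℕ∞ | ∃ n : ℕ, N = (n : ℕ∞) ∧
    ∀ S : Multiset G, n ≤ Multiset.card S → HasWZeroSubsumLen W S L}

/-- The `d`-constrained `W`-weighted Davenport constant `s_{W,≤d}(G)`. -/
noncomputable def sWle (W : Set ℤ) (G : Type*) [AddCommGroup G] (d : ℕ) : ℕ∞ :=
  sWL W G {t | 1 ≤ t ∧ t ≤ d}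

/-- `e_W(G)`: the smallest `t ≥ 1` such that some `t` weights from `W` sum to a
multiple of `exp(G)`. -/
noncomputable def eW (W : Set ℤ) (G : Type*) [AddCommGroup G] : ℕ :=
  sInf {t : ℕ | 1 ≤ t ∧ ∃ w : Fin t → ℤ, (∀ i, w i ∈ W) ∧
    ((AddMonoid.exponent G : ℤ) ∣ ∑ i, w i)}

/-- `W` is multiplicatively closed modulo `n`. -/
def MulClosedMod (W : Set ℤ) (n : ℕ) : Prop :=
  ∀ w ∈ W, ∀ w' ∈ W, ∃ u ∈ W, (n : ℤ) ∣ w * w' - u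

/-!
Let `T` be a longest sequence without `m` disjoint zero-subsums, so `|T| = D_{W,m}(G) - 1`, let
`g` have order `exp(G)` and `u ∈ W`, and consider `S = g · (-u g) · T`. Suppose `S` had `m + 1`
disjoint zero-subsums. If `g` and `-u g` are used by two different ones, with weights `w` and
`v`, then multiplying the first by (a representative in `W` of) `v u` and the second by `w`
cancels the two terms, and the other terms of both subsums form one zero-subsum, nonempty since
`w g ≠ 0`. Otherwise one of the subsums absorbs every occurrence of `g` and `-u g` outside `T`,
and dropping it leaves `m` disjoint zero-subsums of `T`. Either way `T` would have `m`, so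
`D_{W,m+1}(G) > |S| = D_{W,m}(G) + 1`.
-/

section WeightedLists

variable {G : Type*}

def wSupport (l : List (ℤ × G)) : Multiset G := ↑(l.map Prod.snd)

theorem wSupport_append (l₁ l₂ : List (ℤ × G)) :
    wSupport (l₁ ++ l₂) = wSupport l₁ + wSupport l₂ := by
  simp [wSupport]

theorem sum_map_wSupport_coe (ls : List (List (ℤ × G))) :
    ((ls : Multiset (List (ℤ × G))).map wSupport).sum = ↑(ls.flatten.map Prod.snd) := by
  induction ls <;> simp_all [wSupport]

variable [AddCommGroup G] {W : Set ℤ}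

def wSum (l : List (ℤ × G)) : G := (l.map fun p => p.1 • p.2).sum

def IsWZeroSum (W : Set ℤ) (l : List (ℤ × G)) : Prop :=
  l ≠ [] ∧ (∀ p ∈ l, p.1 ∈ W) ∧ wSum l = 0

theorem wSum_append (l₁ l₂ : List (ℤ × G)) : wSum (l₁ ++ l₂) = wSum l₁ + wSum l₂ := by
  simp [wSum]

theorem hasDisjointWZeroSubsums_iff {S : Multiset G} {m : ℕ} :
    HasDisjointWZeroSubsums W S m ↔ ∃ M : Multiset (List (ℤ × G)), Multiset.card M = m ∧
      (∀ l ∈ M, IsWZeroSum W l) ∧ (M.map wSupport).sum ≤ S := by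
  constructor
  · rintro ⟨ls, hlen, hls, hle⟩
    exact ⟨ls, hlen, hls, (sum_map_wSupport_coe ls).trans_le hle⟩
  · rintro ⟨⟨ls⟩, hlen, hls, hle⟩
    exact ⟨ls, hlen, hls, (sum_map_wSupport_coe ls).symm.trans_le hle⟩

theorem HasDisjointWZeroSubsums.le_card {S : Multiset G} {m : ℕ}
    (h : HasDisjointWZeroSubsums W S m) : m ≤ Multiset.card S := by
  obtain ⟨M, rfl, hM, hle⟩ := hasDisjointWZeroSubsums_iff.1 h
  refine le_trans ?_ (Multiset.card_le_card hle)
  have hpos : ∀ n ∈ M.map (fun l => Multiset.card (wSupport l)), 1 ≤ n := by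
    simp only [Multiset.mem_map, forall_exists_index, and_imp]
    rintro _ l hl rfl
    simpa [wSupport, Nat.one_le_iff_ne_zero] using (hM l hl).1
  have hcard : Multiset.card (M.map wSupport).sum =
      (M.map fun l => Multiset.card (wSupport l)).sum :=
    (Multiset.card_join (M.map wSupport)).trans (by rw [Multiset.map_map]; rfl)
  simpa [hcard] using Multiset.card_nsmul_le_sum hpos

theorem MulClosedMod.exists_zsmul_eq (hmul : MulClosedMod W (AddMonoid.exponent G)) {v w : ℤ}
    (hv : v ∈ W) (hw : w ∈ W) : ∃ c ∈ W, ∀ x : G, c • x = (v * w) • x := by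
  obtain ⟨c, hc, hdvd⟩ := hmul v hv w hw
  exact ⟨c, hc, fun x => zsmul_eq_zsmul_iff_modEq.2 <| Int.modEq_iff_dvd.2 <|
    (Int.natCast_dvd_natCast.2 (AddMonoid.addOrder_dvd_exponent x)).trans hdvd⟩

theorem exists_wSum_eq_zsmul (hmul : MulClosedMod W (AddMonoid.exponent G)) {c : ℤ} (hc : c ∈ W)
    {A : List (ℤ × G)} (hA : ∀ p ∈ A, p.1 ∈ W) :
    ∃ A' : List (ℤ × G), (∀ p ∈ A', p.1 ∈ W) ∧ A'.map Prod.snd = A.map Prod.snd ∧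
      wSum A' = c • wSum A := by
  choose! f hfW hf using fun w (hw : w ∈ W) => hmul.exists_zsmul_eq hc hw
  refine ⟨A.map (Prod.map f id), ?_, by simp [Function.comp_def], ?_⟩
  · intro q hq
    obtain ⟨p, hp, rfl⟩ := List.mem_map.1 hq
    exact hfW _ (hA p hp)
  · simp only [wSum, List.smul_sum, List.map_map]
    congr 1
    refine List.map_congr_left fun p hp => ?_
    simp [hf _ (hA p hp), mul_zsmul]

theorem IsWZeroSum.exists_wSupport_eq_cons {l : List (ℤ × G)} (h : IsWZeroSum W l) {a : G}
    (ha : a ∈ wSupport l) : ∃ w ∈ W, ∃ A : List (ℤ × G), (∀ p ∈ A, p.1 ∈ W) ∧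
      wSum A = -(w • a) ∧ wSupport l = a ::ₘ wSupport A := by
  classical
  obtain ⟨p, hp, rfl⟩ := List.mem_map.1 (Multiset.mem_coe.1 ha)
  have hperm := List.perm_cons_erase hp
  refine ⟨p.1, h.2.1 p hp, l.erase p, fun q hq => h.2.1 q (List.mem_of_mem_erase hq), ?_,
    Multiset.coe_eq_coe.2 (hperm.map _)⟩
  have hsum : wSum l = p.1 • p.2 + wSum (l.erase p) := by
    simpa [wSum] using (hperm.map fun p => p.1 • p.2).sum_eq
  exact eq_neg_of_add_eq_zero_right (hsum ▸ h.2.2)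

theorem exists_isWZeroSum_merge (hmul : MulClosedMod W (AddMonoid.exponent G)) {g : G}
    (hg : ∀ w ∈ W, w • g ≠ 0) {u : ℤ} (hu : u ∈ W) {l₁ l₂ : List (ℤ × G)}
    (h₁ : IsWZeroSum W l₁) (h₂ : IsWZeroSum W l₂) (hg₁ : g ∈ wSupport l₁)
    (hg₂ : -(u • g) ∈ wSupport l₂) :
    ∃ L, IsWZeroSum W L ∧ wSupport l₁ + wSupport l₂ = g ::ₘ -(u • g) ::ₘ wSupport L := by
  obtain ⟨w, hw, A, hAW, hA, hl₁⟩ := h₁.exists_wSupport_eq_cons hg₁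
  obtain ⟨v, hv, B, hBW, hB, hl₂⟩ := h₂.exists_wSupport_eq_cons hg₂
  obtain ⟨c, hc, hcx⟩ := hmul.exists_zsmul_eq hv hu
  obtain ⟨A', hA'W, hA'A, hA'⟩ := exists_wSum_eq_zsmul hmul hc hAW
  obtain ⟨B', hB'W, hB'B, hB'⟩ := exists_wSum_eq_zsmul hmul hw hBW
  have hA'ne : A' ≠ [] := by
    rintro rfl
    have : A = [] := List.map_eq_nil_iff.1 hA'A.symm
    subst this
    exact hg w hw (neg_eq_zero.1 hA.symm)
  refine ⟨A' ++ B', ⟨fun h => hA'ne (List.append_eq_nil_iff.1 h).1, ?_, ?_⟩, ?_⟩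
  · simpa [or_imp, forall_and] using ⟨fun a b h => hA'W (a, b) h, fun a b h => hB'W (a, b) h⟩
  · rw [wSum_append, hA', hB', hA, hB, hcx]
    simp only [smul_neg, neg_neg, smul_smul]
    rw [mul_comm w (v * u), neg_add_cancel]
  · rw [hl₁, hl₂, wSupport_append]
    simp only [wSupport, hA'A, hB'B, Multiset.cons_add, Multiset.add_cons]
    exact Multiset.cons_swap _ _ _

end WeightedLists

namespace Multiset

variable {α β : Type*}

theorem le_of_mem_of_add_le_cons_cons {a b : α} {A B T : Multiset α} (ha : a ∈ A) (hb : b ∉ B)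
    (h : A + B ≤ a ::ₘ b ::ₘ T) : B ≤ T := by
  obtain ⟨X, rfl⟩ := exists_cons_of_mem ha
  rw [cons_add, cons_le_cons_iff] at h
  exact (le_cons_of_notMem hb).1 ((le_add_left _ _).trans h)

theorem exists_cons_eq_sum_map_le_of_mem (f : β → Multiset α) {M : Multiset β} {a b : α}
    {T : Multiset α} (h : (M.map f).sum ≤ a ::ₘ b ::ₘ T) (ha : a ∈ (M.map f).sum)
    (hab : ¬ ∃ x y M₀, M = x ::ₘ y ::ₘ M₀ ∧ a ∈ f x ∧ b ∈ f y) :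
    ∃ x M₀, M = x ::ₘ M₀ ∧ (M₀.map f).sum ≤ T := by
  obtain ⟨_, hfx, hax⟩ := mem_join.1 ha
  obtain ⟨x, hx, rfl⟩ := mem_map.1 hfx
  obtain ⟨M₀, rfl⟩ := exists_cons_of_mem hx
  refine ⟨x, M₀, rfl, le_of_mem_of_add_le_cons_cons hax ?_ (by simpa using h)⟩
  intro hb
  obtain ⟨_, hfy, hby⟩ := mem_join.1 hb
  obtain ⟨y, hy, rfl⟩ := mem_map.1 hfy
  obtain ⟨M₁, rfl⟩ := exists_cons_of_mem hy
  exact hab ⟨x, y, M₁, rfl, hax, hby⟩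

theorem exists_cons_cons_eq_or_exists_cons_eq_sum_map_le (f : β → Multiset α) {M : Multiset β}
    (hM : M ≠ 0) {a b : α} {T : Multiset α} (h : (M.map f).sum ≤ a ::ₘ b ::ₘ T) :
    (∃ x y M₀, M = x ::ₘ y ::ₘ M₀ ∧ a ∈ f x ∧ b ∈ f y) ∨
      ∃ x M₀, M = x ::ₘ M₀ ∧ (M₀.map f).sum ≤ T := by
  by_cases hab : ∃ x y M₀, M = x ::ₘ y ::ₘ M₀ ∧ a ∈ f x ∧ b ∈ f y
  · exact Or.inl hab
  right
  by_cases ha : a ∈ (M.map f).sum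
  · exact exists_cons_eq_sum_map_le_of_mem f h ha hab
  by_cases hb : b ∈ (M.map f).sum
  · refine exists_cons_eq_sum_map_le_of_mem f (cons_swap a b T ▸ h) hb ?_
    rintro ⟨x, y, M₀, rfl, hbx, hay⟩
    exact hab ⟨y, x, M₀, cons_swap _ _ _, hay, hbx⟩
  obtain ⟨x, hx⟩ := exists_mem_of_ne_zero hM
  obtain ⟨M₀, rfl⟩ := exists_cons_of_mem hx
  refine ⟨x, M₀, rfl, le_trans ?_ ((le_cons_of_notMem hb).1 ((le_cons_of_notMem ha).1 h))⟩
  simp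

theorem exists_le_count_of_mul_card_le [Fintype α] [Nonempty α] [DecidableEq α]
    {S : Multiset α} {n : ℕ} (h : n * Fintype.card α ≤ card S) : ∃ x, n ≤ S.count x := by
  by_contra! hlt
  have := Finset.sum_lt_sum_of_nonempty Finset.univ_nonempty fun x _ => hlt x
  rw [sum_count_eq_card fun x _ => Finset.mem_univ x, Finset.sum_const, Finset.card_univ,
    smul_eq_mul, mul_comm] at this
  omega

end Multiset

section Davenport

variable {G : Type*} [AddCommGroup G] {W : Set ℤ}

theorem not_hasDisjointWZeroSubsums_cons_cons (hmul : MulClosedMod W (AddMonoid.exponent G))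
    {g : G} (hg : ∀ w ∈ W, w • g ≠ 0) {u : ℤ} (hu : u ∈ W) {T : Multiset G} {m : ℕ}
    (hT : ¬ HasDisjointWZeroSubsums W T m) :
    ¬ HasDisjointWZeroSubsums W (g ::ₘ -(u • g) ::ₘ T) (m + 1) := by
  rw [hasDisjointWZeroSubsums_iff] at hT ⊢
  rintro ⟨M, hcard, hM, hle⟩
  have hM0 : M ≠ 0 := by
    rintro rfl
    simp at hcard
  rcases Multiset.exists_cons_cons_eq_or_exists_cons_eq_sum_map_le wSupport hM0 hle with
    ⟨x, y, M₀, rfl, hgx, hgy⟩ | ⟨x, M₀, rfl, hM₀⟩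
  · obtain ⟨L, hL, hxy⟩ :=
      exists_isWZeroSum_merge hmul hg hu (hM x (by simp)) (hM y (by simp)) hgx hgy
    refine hT ⟨L ::ₘ M₀, by simpa using hcard, Multiset.forall_mem_cons.2
      ⟨hL, fun l hl => hM l (by simp [hl])⟩, ?_⟩
    simp only [Multiset.map_cons, Multiset.sum_cons, ← add_assoc, hxy] at hle ⊢
    simpa using hle
  · exact hT ⟨M₀, by simpa using hcard, fun l hl => hM l (by simp [hl]), hM₀⟩

theorem exists_forall_zsmul_ne_zero [Finite G]
    (hnt : ∀ w ∈ W, ¬ ((AddMonoid.exponent G : ℤ) ∣ w)) : ∃ g : G, ∀ w ∈ W, w • g ≠ 0 := by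
  obtain ⟨g, hg⟩ :=
    AddMonoid.exists_addOrderOf_eq_exponent (G := G) AddMonoid.ExponentExists.of_finite
  exact ⟨g, fun w hw h0 => hnt w hw (hg ▸ addOrderOf_dvd_iff_zsmul_eq_zero.2 h0)⟩

variable [Fintype G]

theorem hasDisjointWZeroSubsums_of_mul_card_mul_card_le {w : ℤ} (hw : w ∈ W) {S : Multiset G}
    {k : ℕ} (hS : k * Fintype.card G * Fintype.card G ≤ Multiset.card S) :
    HasDisjointWZeroSubsums W S k := by
  classical
  obtain ⟨x, hx⟩ := Multiset.exists_le_count_of_mul_card_le hS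
  rw [hasDisjointWZeroSubsums_iff]
  refine ⟨Multiset.replicate k (List.replicate (Fintype.card G) (w, x)), by simp, ?_, ?_⟩
  · simp only [Multiset.mem_replicate, and_imp]
    rintro _ - rfl
    refine ⟨by simp [Fintype.card_ne_zero], by simp [List.mem_replicate, hw], ?_⟩
    simp [wSum, List.map_replicate, List.sum_replicate, card_nsmul_eq_zero]
  · simpa [wSupport, Multiset.sum_replicate, Multiset.nsmul_replicate, Multiset.coe_replicate,
      ← Multiset.le_count_iff_replicate_le] using hx

theorem hasDisjointWZeroSubsums_of_DW_le (hW : W.Nonempty) {m : ℕ} {S : Multiset G}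
    (h : DW W G m ≤ Multiset.card S) : HasDisjointWZeroSubsums W S m := by
  obtain ⟨w, hw⟩ := hW
  have hne : {n | ∀ S : Multiset G, n ≤ Multiset.card S → HasDisjointWZeroSubsums W S m}.Nonempty :=
    ⟨_, fun _ hS => hasDisjointWZeroSubsums_of_mul_card_mul_card_le hw hS⟩
  exact Nat.sInf_mem hne S h

theorem card_lt_DW_of_not_hasDisjointWZeroSubsums (hW : W.Nonempty) {m : ℕ} {S : Multiset G}
    (h : ¬ HasDisjointWZeroSubsums W S m) : Multiset.card S < DW W G m :=
  lt_of_not_ge fun hle => h (hasDisjointWZeroSubsums_of_DW_le hW hle)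

theorem le_DW (hW : W.Nonempty) (m : ℕ) : m ≤ DW W G m := by
  simpa using (hasDisjointWZeroSubsums_of_DW_le hW
    (S := Multiset.replicate (DW W G m) (0 : G)) (by simp)).le_card

theorem exists_not_hasDisjointWZeroSubsums (hW : W.Nonempty) {m : ℕ} (hm : 1 ≤ m) :
    ∃ T : Multiset G, DW W G m ≤ Multiset.card T + 1 ∧ ¬ HasDisjointWZeroSubsums W T m := by
  have hpos := le_DW (G := G) hW m
  have hD := Nat.notMem_of_lt_sInf (show DW W G m - 1 < DW W G m by omega)
  simp only [Set.mem_ofPred_eq, not_forall] at hD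
  obtain ⟨T, hT, hTm⟩ := hD
  exact ⟨T, by omega, hTm⟩

end Davenport

theorem stmt10_general {G : Type*} [AddCommGroup G] [Fintype G] (W : Set ℤ) (hW : W.Nonempty)
    (m : ℕ) (hm : 1 ≤ m)
    (hmul : MulClosedMod W (AddMonoid.exponent G))
    (hnt : ∀ w ∈ W, ¬ ((AddMonoid.exponent G : ℤ) ∣ w)) :
    DW W G m + 2 ≤ DW W G (m + 1) := by
  obtain ⟨g, hg⟩ := exists_forall_zsmul_ne_zero hnt
  have ⟨u, hu⟩ := hW
  obtain ⟨T, hT, hTm⟩ := exists_not_hasDisjointWZeroSubsums (G := G) hW hm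
  have hS := card_lt_DW_of_not_hasDisjointWZeroSubsums hW
    (not_hasDisjointWZeroSubsums_cons_cons hmul hg hu hTm)
  rw [Multiset.card_cons, Multiset.card_cons] at hS
  omega

/-- if `|G| > 1`, `W` is multiplicatively closed modulo `exp(G)` and
non-trivial modulo `exp(G)`, then `D_{W,m+1}(G) ≥ D_{W,m}(G) + 2`. -/
theorem stmt10 {G : Type*} [AddCommGroup G] [Fintype G] (W : Set ℤ) (hW : W.Nonempty)
    (hcard : 1 < Fintype.card G) (m : ℕ) (hm : 1 ≤ m)
    (hmul : MulClosedMod W (AddMonoid.exponent G))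
    (hnt : ∀ w ∈ W, ¬ ((AddMonoid.exponent G : ℤ) ∣ w)) :
    DW W G m + 2 ≤ DW W G (m + 1) :=
  stmt10_general W hW m hm hmul hnt
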